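/- arXiv:2304.01351 — 2 statements merged into one kernel-verified Lean document; each statement's English description precedes it below -/
import Mathlib

section
/- Let A be an N × M complex matrix, α, λ > 0, 0 < m < 1, and let H : ℂ^M → ℂ^M be Lipschitz with constant at most 1 − m. Define T_MOL : ℂ^M → ℂ^M by T_MOL(x) = (I + αλ AᴴA)⁻¹((1 − α)x + αH(x)). Then T_MOL is Lipschitz with constant at most √(1 − 2αm + α²(2 − m)²). -/
/-! The resolvent `(I + αλ AᴴA)⁻¹` of the positive semidefinite operator `αλ AᴴA` is
nonexpansive, since `‖(I + αλ AᴴA) w‖² ≥ ‖w‖² + 2αλ‖A w‖²`. Hence `T_MOL` is Lipschitz with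
the constant `|1 - α| + α (1 - m)` of the relaxed map `x ↦ (1 - α) x + α H x`, and this
constant is at most `√(1 - 2αm + α²(2 - m)²)` because the difference of the squares is
`2α(1 - m)(1 + α - |1 - α|) ≥ 0`. -/

open Matrix

/-- The linear action of a complex matrix on Euclidean space. -/
noncomputable def appM {N M : ℕ} (A : Matrix (Fin N) (Fin M) ℂ)
    (x : EuclideanSpace ℂ (Fin M)) : EuclideanSpace ℂ (Fin N) :=
  Matrix.toEuclideanLin A x

section InnerProductSpace

variable {𝕜 E : Type*} [RCLike 𝕜] [SeminormedAddCommGroup E] [InnerProductSpace 𝕜 E]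

theorem norm_le_norm_add_of_re_inner_nonneg {w v : E} (h : 0 ≤ RCLike.re (inner 𝕜 w v)) :
    ‖w‖ ≤ ‖w + v‖ := by
  refine le_of_sq_le_sq ?_ (norm_nonneg _)
  rw [norm_add_sq (𝕜 := 𝕜)]
  nlinarith [sq_nonneg ‖v‖]

end InnerProductSpace

namespace Matrix

variable {𝕜 : Type*} [RCLike 𝕜] {m n : Type*} [Fintype m] [DecidableEq m] [Fintype n]
  [DecidableEq n]

theorem norm_le_norm_toEuclideanLin_one_add_smul_conjTranspose_mul_self (A : Matrix m n 𝕜)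
    {c : ℝ} (hc : 0 ≤ c) (w : EuclideanSpace 𝕜 n) :
    ‖w‖ ≤ ‖toEuclideanLin (1 + c • (Aᴴ * A)) w‖ := by
  have hre : RCLike.re (inner 𝕜 w (c • toEuclideanLin Aᴴ (toEuclideanLin A w)))
      = c * ‖toEuclideanLin A w‖ ^ 2 := by
    rw [toEuclideanLin_conjTranspose_eq_adjoint, inner_smul_right_eq_smul,
      LinearMap.adjoint_inner_right, inner_self_eq_norm_sq_to_K, RCLike.smul_re,
      ← RCLike.ofReal_pow, RCLike.ofReal_re]
  have hexpand : toEuclideanLin (1 + c • (Aᴴ * A)) w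
      = w + c • toEuclideanLin Aᴴ (toEuclideanLin A w) := by
    rw [RCLike.real_smul_eq_coe_smul (K := 𝕜), RCLike.real_smul_eq_coe_smul (K := 𝕜), map_add,
      map_smul, LinearMap.add_apply, LinearMap.smul_apply, toLpLin_one, toLpLin_mul_same,
      LinearMap.comp_apply, LinearMap.id_apply]
  rw [hexpand]
  exact norm_le_norm_add_of_re_inner_nonneg (𝕜 := 𝕜) (hre ▸ by positivity)

theorem norm_toEuclideanLin_inv_le {B : Matrix n n 𝕜}
    (hB : ∀ w, ‖w‖ ≤ ‖toEuclideanLin B w‖) (v : EuclideanSpace 𝕜 n) :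
    ‖toEuclideanLin B⁻¹ v‖ ≤ ‖v‖ := by
  have hinj : Function.Injective B.mulVec := by
    intro u u' huu'
    have := hB (WithLp.toLp 2 (u - u'))
    rwa [toLpLin_apply, WithLp.ofLp_toLp, mulVec_sub, huu', sub_self, WithLp.toLp_zero, norm_zero,
      norm_le_zero_iff, WithLp.toLp_eq_zero, sub_eq_zero] at this
  have hunit : IsUnit B.det := (isUnit_iff_isUnit_det B).mp (mulVec_injective_iff_isUnit.mp hinj)
  simpa [← LinearMap.comp_apply, ← toLpLin_mul_same, mul_nonsing_inv B hunit] using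
    hB (toEuclideanLin B⁻¹ v)

end Matrix

theorem norm_relaxation_sub_le {E : Type*} [SeminormedAddCommGroup E] [NormedSpace ℝ E]
    {α K : ℝ} (hα : 0 ≤ α) {H : E → E} (hH : ∀ x y, ‖H x - H y‖ ≤ K * ‖x - y‖) (x y : E) :
    ‖((1 - α) • x + α • H x) - ((1 - α) • y + α • H y)‖ ≤ (|1 - α| + α * K) * ‖x - y‖ := by
  calc ‖((1 - α) • x + α • H x) - ((1 - α) • y + α • H y)‖
      = ‖(1 - α) • (x - y) + α • (H x - H y)‖ := by congr 1; module
    _ ≤ |1 - α| * ‖x - y‖ + α * ‖H x - H y‖ := by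
      refine (norm_add_le _ _).trans_eq ?_
      rw [norm_smul, norm_smul, Real.norm_eq_abs, Real.norm_eq_abs, abs_of_nonneg hα]
    _ ≤ |1 - α| * ‖x - y‖ + α * (K * ‖x - y‖) := by gcongr; exact hH x y
    _ = (|1 - α| + α * K) * ‖x - y‖ := by ring

theorem abs_one_sub_add_mul_one_sub_le_sqrt {α m : ℝ} (hα : 0 ≤ α) (hm : m ≤ 1) :
    |1 - α| + α * (1 - m) ≤ √(1 - 2 * α * m + α ^ 2 * (2 - m) ^ 2) := by
  refine Real.le_sqrt_of_sq_le ?_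
  have habs : |1 - α| ≤ 1 + α := abs_le.mpr ⟨by linarith, by linarith⟩
  have hgap : 0 ≤ α * (1 - m) * (1 + α - |1 - α|) :=
    mul_nonneg (mul_nonneg hα (by linarith)) (by linarith)
  nlinarith [sq_abs (1 - α)]

theorem stmt8_general {N M : ℕ} (A : Matrix (Fin N) (Fin M) ℂ) (α lam m : ℝ)
    (hα : 0 < α) (hlam : 0 < lam) (hm1 : m < 1)
    (H : EuclideanSpace ℂ (Fin M) → EuclideanSpace ℂ (Fin M))
    (hH : ∀ x y, ‖H x - H y‖ ≤ (1 - m) * ‖x - y‖)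
    (T : EuclideanSpace ℂ (Fin M) → EuclideanSpace ℂ (Fin M))
    (hT : ∀ x, T x = appM ((1 + (α * lam) • (Aᴴ * A))⁻¹)
        ((1 - α) • x + α • H x)) :
    ∀ x y, ‖T x - T y‖ ≤
      Real.sqrt (1 - 2 * α * m + α ^ 2 * (2 - m) ^ 2) * ‖x - y‖ := by
  intro x y
  have hresolvent := norm_toEuclideanLin_inv_le
    (norm_le_norm_toEuclideanLin_one_add_smul_conjTranspose_mul_self A (mul_pos hα hlam).le)
  calc ‖T x - T y‖ ≤ ‖((1 - α) • x + α • H x) - ((1 - α) • y + α • H y)‖ := by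
        rw [hT, hT, appM, appM, ← map_sub]; exact hresolvent _
    _ ≤ (|1 - α| + α * (1 - m)) * ‖x - y‖ := norm_relaxation_sub_le hα.le hH x y
    _ ≤ √(1 - 2 * α * m + α ^ 2 * (2 - m) ^ 2) * ‖x - y‖ := by
        gcongr; exact abs_one_sub_add_mul_one_sub_le_sqrt hα.le hm1.le

/-- With `α, λ > 0`, `0 < m < 1`, and `H` Lipschitz with constant
at most `1 − m`, the map `T_MOL(x) = (I + αλ AᴴA)⁻¹((1 − α)x + αH(x))` is
Lipschitz with constant at most `√(1 − 2αm + α²(2 − m)²)`. -/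
theorem stmt8 {N M : ℕ} (A : Matrix (Fin N) (Fin M) ℂ) (α lam m : ℝ)
    (hα : 0 < α) (hlam : 0 < lam) (hm0 : 0 < m) (hm1 : m < 1)
    (H : EuclideanSpace ℂ (Fin M) → EuclideanSpace ℂ (Fin M))
    (hH : ∀ x y, ‖H x - H y‖ ≤ (1 - m) * ‖x - y‖)
    (T : EuclideanSpace ℂ (Fin M) → EuclideanSpace ℂ (Fin M))
    (hT : ∀ x, T x = appM ((1 + (α * lam) • (Aᴴ * A))⁻¹)
        ((1 - α) • x + α • H x)) :
    ∀ x y, ‖T x - T y‖ ≤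
      Real.sqrt (1 - 2 * α * m + α ^ 2 * (2 - m) ^ 2) * ‖x - y‖ :=
  stmt8_general A α lam m hα hlam hm1 H hH T hT
end

section
/- Let A be an N × M complex matrix with operator norm at most 1, α, λ > 0, 0 < m < 1 with α < 2m/(2 − m)², and let H : ℂ^M → ℂ^M be Lipschitz with constant at most 1 − m. For b ∈ ℂ^N define T_MOL(x) = (I + αλ AᴴA)⁻¹((1 − α)x + αH(x)) and z(b) = (I + αλ AᴴA)⁻¹(αλ Aᴴb). Let b₁, b₂ ∈ ℂ^N with δ = b₂ − b₁, and let x*(b₁), x*(b₂) be fixed points: x*(bᵢ) = T_MOL(x*(bᵢ)) + z(bᵢ). Then with Δ = x*(b₂) − x*(b₁), ‖Δ‖ ≤ (αλ / (1 − √(1 − 2αm + α²(2 − m)²))) ‖δ‖. -/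
/-! The resolvent `(1 + αλ AᴴA)⁻¹` is a contraction because `‖x‖² ≤ re ⟪x, (1 + αλ AᴴA) x⟫`.
Hence `T_MOL` is Lipschitz with constant `|1 - α| + α(1 - m) ≤ √(1 - 2αm + α²(2 - m)²) < 1` and
`z` with constant `αλ` (as `‖Aᴴ‖ = ‖A‖ ≤ 1`), so subtracting the two fixed-point equations gives
`‖Δ‖ ≤ √(1 - 2αm + α²(2 - m)²) ‖Δ‖ + αλ ‖δ‖`. -/

open Matrix

namespace LinearMap

variable {𝕜 E F : Type*} [RCLike 𝕜] [NormedAddCommGroup E] [NormedAddCommGroup F]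
  [InnerProductSpace 𝕜 E] [InnerProductSpace 𝕜 F] [FiniteDimensional 𝕜 E] [FiniteDimensional 𝕜 F]

theorem norm_adjoint_apply_le_of_forall_norm_apply_le {T : E →ₗ[𝕜] F}
    (hT : ∀ x, ‖T x‖ ≤ ‖x‖) (y : F) : ‖T.adjoint y‖ ≤ ‖y‖ := by
  have h : ‖T.adjoint y‖ ^ 2 ≤ ‖T.adjoint y‖ * ‖y‖ :=
    calc ‖T.adjoint y‖ ^ 2 = RCLike.re (inner 𝕜 (T (T.adjoint y)) y) := by
          rw [← adjoint_inner_right, inner_self_eq_norm_sq]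
      _ ≤ ‖T (T.adjoint y)‖ * ‖y‖ := re_inner_le_norm _ _
      _ ≤ ‖T.adjoint y‖ * ‖y‖ := by gcongr; exact hT _
  nlinarith [norm_nonneg (T.adjoint y), norm_nonneg y]

theorem norm_le_norm_add_smul_adjoint_apply_apply (T : E →ₗ[𝕜] F) {c : ℝ} (hc : 0 ≤ c)
    (x : E) : ‖x‖ ≤ ‖x + (c : 𝕜) • T.adjoint (T x)‖ := by
  have h : ‖x‖ ^ 2 + c * ‖T x‖ ^ 2 ≤ ‖x‖ * ‖x + (c : 𝕜) • T.adjoint (T x)‖ := by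
    calc ‖x‖ ^ 2 + c * ‖T x‖ ^ 2 = RCLike.re (inner 𝕜 x (x + (c : 𝕜) • T.adjoint (T x))) := by
          rw [inner_add_right, inner_smul_real_right, adjoint_inner_right, map_add,
            RCLike.smul_re, inner_self_eq_norm_sq, inner_self_eq_norm_sq]
      _ ≤ _ := re_inner_le_norm _ _
  nlinarith [norm_nonneg x, norm_nonneg (x + (c : 𝕜) • T.adjoint (T x)), sq_nonneg ‖T x‖]

end LinearMap

namespace Matrix

variable {𝕜 m n : Type*} [RCLike 𝕜] [Fintype m] [DecidableEq m] [Fintype n] [DecidableEq n]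

theorem toEuclideanLin_one_add_smul_conjTranspose_mul_self_apply (A : Matrix m n 𝕜) (c : ℝ)
    (x : EuclideanSpace 𝕜 n) :
    toEuclideanLin (1 + c • (Aᴴ * A)) x =
      x + (c : 𝕜) • (toEuclideanLin A).adjoint (toEuclideanLin A x) := by
  rw [RCLike.real_smul_eq_coe_smul (K := 𝕜), map_add, map_smul, toLpLin_mul_same,
    toEuclideanLin_conjTranspose_eq_adjoint]
  simp

open scoped ComplexOrder in
theorem norm_toEuclideanLin_inv_one_add_smul_conjTranspose_mul_self_apply_le (A : Matrix m n 𝕜)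
    {c : ℝ} (hc : 0 ≤ c) (y : EuclideanSpace 𝕜 n) :
    ‖toEuclideanLin (1 + c • (Aᴴ * A))⁻¹ y‖ ≤ ‖y‖ := by
  set S := 1 + c • (Aᴴ * A)
  have hS : IsUnit S.det :=
    (PosDef.one.add_posSemidef ((posSemidef_conjTranspose_mul_self A).smul hc)).det_pos.ne'.isUnit
  have hy : toEuclideanLin S (toEuclideanLin S⁻¹ y) = y := by
    rw [← LinearMap.comp_apply, ← toLpLin_mul_same, mul_nonsing_inv S hS, toLpLin_one]; rfl
  calc ‖toEuclideanLin S⁻¹ y‖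
      ≤ ‖toEuclideanLin S (toEuclideanLin S⁻¹ y)‖ := by
        rw [toEuclideanLin_one_add_smul_conjTranspose_mul_self_apply]
        exact LinearMap.norm_le_norm_add_smul_adjoint_apply_apply _ hc _
    _ = ‖y‖ := by rw [hy]

end Matrix

theorem norm_sub_le_of_eq_add_of_forall_norm_sub_le {E : Type*} [SeminormedAddCommGroup E]
    {T : E → E} {q : ℝ} (hq : q < 1) (hT : ∀ x y, ‖T x - T y‖ ≤ q * ‖x - y‖)
    {x₁ x₂ z₁ z₂ : E} (h₁ : x₁ = T x₁ + z₁) (h₂ : x₂ = T x₂ + z₂) :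
    ‖x₂ - x₁‖ ≤ ‖z₂ - z₁‖ / (1 - q) := by
  have h : ‖x₂ - x₁‖ ≤ q * ‖x₂ - x₁‖ + ‖z₂ - z₁‖ :=
    calc ‖x₂ - x₁‖ = ‖(T x₂ + z₂) - (T x₁ + z₁)‖ := by rw [← h₁, ← h₂]
      _ = ‖(T x₂ - T x₁) + (z₂ - z₁)‖ := by congr 1; abel
      _ ≤ ‖T x₂ - T x₁‖ + ‖z₂ - z₁‖ := norm_add_le _ _
      _ ≤ q * ‖x₂ - x₁‖ + ‖z₂ - z₁‖ := by gcongr; exact hT _ _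
  rw [le_div_iff₀ (sub_pos.2 hq)]
  linarith

theorem norm_relax_sub_relax_le {E : Type*} [SeminormedAddCommGroup E] [NormedSpace ℝ E]
    {H : E → E} {α L : ℝ} (hα : 0 ≤ α) (hH : ∀ x y, ‖H x - H y‖ ≤ L * ‖x - y‖) (x y : E) :
    ‖((1 - α) • x + α • H x) - ((1 - α) • y + α • H y)‖ ≤ (|1 - α| + α * L) * ‖x - y‖ :=
  calc ‖((1 - α) • x + α • H x) - ((1 - α) • y + α • H y)‖
      = ‖(1 - α) • (x - y) + α • (H x - H y)‖ := by rw [smul_sub, smul_sub]; congr 1; abel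
    _ ≤ |1 - α| * ‖x - y‖ + α * (L * ‖x - y‖) := by
        refine (norm_add_le _ _).trans ?_
        rw [norm_smul, norm_smul, Real.norm_eq_abs, Real.norm_of_nonneg hα]
        gcongr
        exact hH x y
    _ = (|1 - α| + α * L) * ‖x - y‖ := by ring

theorem sqrt_one_sub_two_mul_add_sq_mul_lt_one {α m : ℝ} (hα : 0 < α) (hm : m < 1)
    (h : α < 2 * m / (2 - m) ^ 2) : √(1 - 2 * α * m + α ^ 2 * (2 - m) ^ 2) < 1 := by
  have h' : α * (2 - m) ^ 2 < 2 * m := (lt_div_iff₀ (by nlinarith)).mp h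
  exact (Real.sqrt_lt' one_pos).2 (by nlinarith)

theorem stmt16_general {N M : ℕ} (A : Matrix (Fin N) (Fin M) ℂ)
    (hA : ∀ x : EuclideanSpace ℂ (Fin M), ‖appM A x‖ ≤ ‖x‖)
    (α lam m : ℝ) (hα : 0 < α) (hlam : 0 < lam) (hm1 : m < 1)
    (hαcond : α < 2 * m / (2 - m) ^ 2)
    (H : EuclideanSpace ℂ (Fin M) → EuclideanSpace ℂ (Fin M))
    (hH : ∀ x y, ‖H x - H y‖ ≤ (1 - m) * ‖x - y‖)
    (T : EuclideanSpace ℂ (Fin M) → EuclideanSpace ℂ (Fin M))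
    (hT : ∀ x, T x = appM ((1 + (α * lam) • (Aᴴ * A))⁻¹)
        ((1 - α) • x + α • H x))
    (z : EuclideanSpace ℂ (Fin N) → EuclideanSpace ℂ (Fin M))
    (hz : ∀ b, z b = appM ((1 + (α * lam) • (Aᴴ * A))⁻¹)
        ((α * lam) • appM Aᴴ b))
    (b₁ b₂ : EuclideanSpace ℂ (Fin N))
    (x₁ x₂ : EuclideanSpace ℂ (Fin M))
    (h₁ : x₁ = T x₁ + z b₁) (h₂ : x₂ = T x₂ + z b₂) :
    ‖x₂ - x₁‖ ≤
      α * lam / (1 - Real.sqrt (1 - 2 * α * m + α ^ 2 * (2 - m) ^ 2)) *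
        ‖b₂ - b₁‖ := by
  have hc : 0 ≤ α * lam := (mul_pos hα hlam).le
  have hq := sqrt_one_sub_two_mul_add_sq_mul_lt_one hα hm1 hαcond
  have hR : ∀ u v, ‖appM (1 + (α * lam) • (Aᴴ * A))⁻¹ u - appM (1 + (α * lam) • (Aᴴ * A))⁻¹ v‖
      ≤ ‖u - v‖ := fun u v => by
    rw [appM, appM, ← map_sub]
    exact Matrix.norm_toEuclideanLin_inv_one_add_smul_conjTranspose_mul_self_apply_le A hc _
  have hTlip : ∀ x y, ‖T x - T y‖ ≤ √(1 - 2 * α * m + α ^ 2 * (2 - m) ^ 2) * ‖x - y‖ := by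
    intro x y
    calc ‖T x - T y‖ ≤ (|1 - α| + α * (1 - m)) * ‖x - y‖ := by
          rw [hT, hT]; exact (hR _ _).trans (norm_relax_sub_relax_le hα.le hH x y)
      _ ≤ _ := by gcongr; exact abs_one_sub_add_mul_one_sub_le_sqrt hα.le hm1.le
  have hzlip : ‖z b₂ - z b₁‖ ≤ α * lam * ‖b₂ - b₁‖ :=
    calc ‖z b₂ - z b₁‖ ≤ ‖(α * lam) • appM Aᴴ b₂ - (α * lam) • appM Aᴴ b₁‖ := by
          rw [hz, hz]; exact hR _ _
      _ = α * lam * ‖(toEuclideanLin A).adjoint (b₂ - b₁)‖ := by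
          rw [← smul_sub, norm_smul, Real.norm_of_nonneg hc, appM, appM, ← map_sub,
            toEuclideanLin_conjTranspose_eq_adjoint]
      _ ≤ α * lam * ‖b₂ - b₁‖ := by
          gcongr; exact LinearMap.norm_adjoint_apply_le_of_forall_norm_apply_le hA _
  calc ‖x₂ - x₁‖ ≤ ‖z b₂ - z b₁‖ / (1 - √(1 - 2 * α * m + α ^ 2 * (2 - m) ^ 2)) :=
        norm_sub_le_of_eq_add_of_forall_norm_sub_le hq hTlip h₁ h₂
    _ ≤ _ := by
        rw [div_mul_eq_mul_div]
        gcongr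

/-- Robustness of MOL fixed points to measurement perturbations:
with `δ = b₂ − b₁` and `Δ = x*(b₂) − x*(b₁)`,
`‖Δ‖ ≤ (αλ / (1 − √(1 − 2αm + α²(2 − m)²))) ‖δ‖`. -/
theorem stmt16 {N M : ℕ} (A : Matrix (Fin N) (Fin M) ℂ)
    (hA : ∀ x : EuclideanSpace ℂ (Fin M), ‖appM A x‖ ≤ ‖x‖)
    (α lam m : ℝ) (hα : 0 < α) (hlam : 0 < lam) (hm0 : 0 < m) (hm1 : m < 1)
    (hαcond : α < 2 * m / (2 - m) ^ 2)
    (H : EuclideanSpace ℂ (Fin M) → EuclideanSpace ℂ (Fin M))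
    (hH : ∀ x y, ‖H x - H y‖ ≤ (1 - m) * ‖x - y‖)
    (T : EuclideanSpace ℂ (Fin M) → EuclideanSpace ℂ (Fin M))
    (hT : ∀ x, T x = appM ((1 + (α * lam) • (Aᴴ * A))⁻¹)
        ((1 - α) • x + α • H x))
    (z : EuclideanSpace ℂ (Fin N) → EuclideanSpace ℂ (Fin M))
    (hz : ∀ b, z b = appM ((1 + (α * lam) • (Aᴴ * A))⁻¹)
        ((α * lam) • appM Aᴴ b))
    (b₁ b₂ : EuclideanSpace ℂ (Fin N))
    (x₁ x₂ : EuclideanSpace ℂ (Fin M))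
    (h₁ : x₁ = T x₁ + z b₁) (h₂ : x₂ = T x₂ + z b₂) :
    ‖x₂ - x₁‖ ≤
      α * lam / (1 - Real.sqrt (1 - 2 * α * m + α ^ 2 * (2 - m) ^ 2)) *
        ‖b₂ - b₁‖ :=
  stmt16_general A hA α lam m hα hlam hm1 hαcond H hH T hT z hz b₁ b₂ x₁ x₂ h₁ h₂
end
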